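/- arXiv:1210.8220 — 3 statements merged into one kernel-verified Lean document; each statement's English description precedes it below -/
import Mathlib

section
/- Let f₁ > 0, μ > 0 with μ ≠ f₁, and let θ̇ ∈ L²([0,∞); ℝᵐ) with L² norm D. Define ζ₂(t) = |e_χ(0)| m ∫₀^t ‖θ̇(τ)‖ e^{−μ(t−τ)} e^{−f₁ τ} dτ for a constant m ≥ 1. Then ∫₀^∞ ζ₂(t)² dt ≤ (m² e_χ(0)²/(4 μ f₁)) D². -/
open MeasureTheory Set Real

/-! By Cauchy–Schwarz on `[0, t]`, `ζ₂(t)² ≤ e_χ(0)² m² D² ∫₀^t e^{-2μ(t-τ)} e^{-2f₁τ} dτ`, and the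
right-hand side integrates in closed form: `∫₀^t … dτ = (e^{-2f₁t} - e^{-2μt}) / (2(μ - f₁))`,
whose integral over `(0, ∞)` is `1 / (4μf₁)`. -/

theorem sq_integral_mul_le_integral_sq_mul_integral_sq {α : Type*} [MeasurableSpace α]
    {ν : Measure α} {f g : α → ℝ} (hf : MemLp f 2 ν) (hg : MemLp g 2 ν) :
    (∫ a, f a * g a ∂ν) ^ 2 ≤ (∫ a, f a ^ 2 ∂ν) * ∫ a, g a ^ 2 ∂ν := by
  have hfg := integral_mul_le_Lp_mul_Lq_of_nonneg HolderConjugate.two_two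
    (.of_forall fun a => norm_nonneg (f a)) (.of_forall fun a => norm_nonneg (g a))
    (by simpa using hf.norm) (by simpa using hg.norm)
  simp only [rpow_two, norm_eq_abs, sq_abs, ← sqrt_eq_rpow] at hfg
  calc (∫ a, f a * g a ∂ν) ^ 2 = ‖∫ a, f a * g a ∂ν‖ ^ 2 := by rw [norm_eq_abs, sq_abs]
    _ ≤ (∫ a, |f a| * |g a| ∂ν) ^ 2 := by
        gcongr
        simpa only [norm_mul, norm_eq_abs] using norm_integral_le_integral_norm (fun a => f a * g a)
    _ ≤ (√(∫ a, f a ^ 2 ∂ν) * √(∫ a, g a ^ 2 ∂ν)) ^ 2 := by gcongr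
    _ = (∫ a, f a ^ 2 ∂ν) * ∫ a, g a ^ 2 ∂ν := by
        rw [mul_pow, sq_sqrt (integral_nonneg fun a => sq_nonneg _),
          sq_sqrt (integral_nonneg fun a => sq_nonneg _)]

theorem sq_intervalIntegral_mul_le {φ k : ℝ → ℝ} (hφ : MemLp φ 2 (volume.restrict (Ioi 0)))
    (hk : Continuous k) {t : ℝ} (ht : 0 ≤ t) :
    (∫ τ in (0:ℝ)..t, φ τ * k τ) ^ 2 ≤ (∫ τ in Ioi 0, φ τ ^ 2) * ∫ τ in (0:ℝ)..t, k τ ^ 2 := by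
  have hφt : MemLp φ 2 (volume.restrict (Ioc 0 t)) :=
    hφ.mono_measure (Measure.restrict_mono Ioc_subset_Ioi_self le_rfl)
  have hkt : MemLp k 2 (volume.restrict (Ioc 0 t)) :=
    (memLp_two_iff_integrable_sq hk.aestronglyMeasurable).2 (hk.pow 2).integrableOn_Ioc
  have hφ_mono : ∫ τ in Ioc 0 t, φ τ ^ 2 ≤ ∫ τ in Ioi 0, φ τ ^ 2 :=
    setIntegral_mono_set hφ.integrable_sq (.of_forall fun τ => sq_nonneg _)
      Ioc_subset_Ioi_self.eventuallyLE
  rw [intervalIntegral.integral_of_le ht, intervalIntegral.integral_of_le ht]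
  exact (sq_integral_mul_le_integral_sq_mul_integral_sq hφt hkt).trans
    (mul_le_mul_of_nonneg_right hφ_mono (integral_nonneg fun τ => sq_nonneg _))

theorem intervalIntegral_sq_exp_mul_exp {μ f : ℝ} (hne : μ ≠ f) (t : ℝ) :
    ∫ τ in (0:ℝ)..t, (exp (-μ * (t - τ)) * exp (-f * τ)) ^ 2 =
      (exp (-(2 * f) * t) - exp (-(2 * μ) * t)) / (2 * (μ - f)) := by
  have hc : 2 * (μ - f) ≠ 0 := by
    have := sub_ne_zero.2 hne
    positivity
  have hsq : ∀ τ, (exp (-μ * (t - τ)) * exp (-f * τ)) ^ 2 =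
      exp (-(2 * μ) * t) * exp (2 * (μ - f) * τ) := fun τ => by
    rw [mul_pow, ← exp_nat_mul, ← exp_nat_mul, ← exp_add, ← exp_add]
    ring_nf
  simp only [hsq, intervalIntegral.integral_const_mul, intervalIntegral.integral_comp_mul_left
    (fun τ => exp τ) hc, integral_exp, smul_eq_mul, mul_zero, exp_zero]
  have hexp : exp (-(2 * μ) * t) * exp (2 * (μ - f) * t) = exp (-(2 * f) * t) := by
    rw [← exp_add]; ring_nf
  rw [← hexp]
  field_simp

theorem integrableOn_exp_sub_exp_div_Ioi {μ f : ℝ} (hμ : 0 < μ) (hf : 0 < f) :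
    IntegrableOn (fun t => (exp (-(2 * f) * t) - exp (-(2 * μ) * t)) / (2 * (μ - f))) (Ioi 0) :=
  ((exp_neg_integrableOn_Ioi 0 (by positivity)).sub
    (exp_neg_integrableOn_Ioi 0 (by positivity))).div_const _

theorem integral_exp_sub_exp_div_Ioi {μ f : ℝ} (hμ : 0 < μ) (hf : 0 < f) (hne : μ ≠ f) :
    ∫ t in Ioi 0, (exp (-(2 * f) * t) - exp (-(2 * μ) * t)) / (2 * (μ - f)) =
      1 / (4 * μ * f) := by
  have hsub := sub_ne_zero.2 hne
  rw [integral_div, integral_sub (exp_neg_integrableOn_Ioi 0 (by positivity))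
    (exp_neg_integrableOn_Ioi 0 (by positivity)), integral_exp_mul_Ioi (by linarith),
    integral_exp_mul_Ioi (by linarith)]
  simp only [mul_zero, exp_zero]
  field_simp
  ring

theorem zeta2_l2_bound_general {m' : ℕ} (f₁ μ : ℝ) (hf₁ : 0 < f₁) (hμ : 0 < μ) (hne : μ ≠ f₁)
    (m echi0 D : ℝ)
    (θd : ℝ → EuclideanSpace ℝ (Fin m')) (hθd : Measurable θd)
    (hD : (∫ τ in Set.Ioi (0:ℝ), ‖θd τ‖^2) = D^2)
    (hDint : Integrable (fun τ => ‖θd τ‖^2) (volume.restrict (Set.Ioi 0)))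
    (ζ₂ : ℝ → ℝ)
    (hζ₂ : ∀ t, ζ₂ t = |echi0| * m * ∫ τ in (0:ℝ)..t,
        ‖θd τ‖ * Real.exp (-μ * (t - τ)) * Real.exp (-f₁ * τ)) :
    (∫ t in Set.Ioi (0:ℝ), (ζ₂ t)^2) ≤ m^2 * echi0^2 / (4 * μ * f₁) * D^2 := by
  have hθL2 : MemLp (fun τ => ‖θd τ‖) 2 (volume.restrict (Ioi 0)) :=
    (memLp_two_iff_integrable_sq hθd.norm.aestronglyMeasurable).2 hDint
  have hpointwise : ∀ t ∈ Ioi (0:ℝ), ζ₂ t ^ 2 ≤ echi0 ^ 2 * m ^ 2 * (D ^ 2 *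
      ((exp (-(2 * f₁) * t) - exp (-(2 * μ) * t)) / (2 * (μ - f₁)))) := by
    intro t ht
    have hCS := sq_intervalIntegral_mul_le hθL2 (by fun_prop) ht.le
      (k := fun τ => exp (-μ * (t - τ)) * exp (-f₁ * τ))
    rw [hD, intervalIntegral_sq_exp_mul_exp hne] at hCS
    rw [hζ₂, mul_pow, mul_pow, sq_abs]
    gcongr
    simpa only [mul_assoc] using hCS
  calc ∫ t in Ioi 0, ζ₂ t ^ 2
      ≤ ∫ t in Ioi 0, echi0 ^ 2 * m ^ 2 * (D ^ 2 *
          ((exp (-(2 * f₁) * t) - exp (-(2 * μ) * t)) / (2 * (μ - f₁)))) :=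
        integral_mono_of_nonneg (.of_forall fun t => sq_nonneg _)
          (((integrableOn_exp_sub_exp_div_Ioi hμ hf₁).const_mul _).const_mul _)
          ((ae_restrict_mem measurableSet_Ioi).mono hpointwise)
    _ = m ^ 2 * echi0 ^ 2 / (4 * μ * f₁) * D ^ 2 := by
        rw [integral_const_mul, integral_const_mul, integral_exp_sub_exp_div_Ioi hμ hf₁ hne]
        ring

theorem zeta2_l2_bound {m' : ℕ} (f₁ μ : ℝ) (hf₁ : 0 < f₁) (hμ : 0 < μ) (hne : μ ≠ f₁)
    (m echi0 D : ℝ) (hm : 1 ≤ m)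
    (θd : ℝ → EuclideanSpace ℝ (Fin m')) (hθd : Measurable θd)
    (hD : (∫ τ in Set.Ioi (0:ℝ), ‖θd τ‖^2) = D^2)
    (hDint : Integrable (fun τ => ‖θd τ‖^2) (volume.restrict (Set.Ioi 0)))
    (ζ₂ : ℝ → ℝ)
    (hζ₂ : ∀ t, ζ₂ t = |echi0| * m * ∫ τ in (0:ℝ)..t,
        ‖θd τ‖ * Real.exp (-μ * (t - τ)) * Real.exp (-f₁ * τ)) :
    (∫ t in Set.Ioi (0:ℝ), (ζ₂ t)^2) ≤ m^2 * echi0^2 / (4 * μ * f₁) * D^2 :=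
  zeta2_l2_bound_general f₁ μ hf₁ hμ hne m echi0 D θd hθd hD hDint ζ₂ hζ₂
end

section
/- Let f₁ > 0 and let θ : [0,∞) → ℝᵐ be C¹ with θ̇ ∈ L²([0,∞)). Let ω : [0,∞) → ℝᵐ be measurable and locally bounded, and define e_χ(t) = ∫₀^t e^{−f₁(t−τ)} θ̇(τ)ᵀ ( ∫₀^τ e^{−f₁(τ−z)} ω(z) dz ) dτ. Then e_χ(t) = o[ sup_{τ≤t} ‖ω(τ)‖ ], i.e., there exists β(t) → 0 with |e_χ(t)| ≤ β(t) sup_{τ≤t} ‖ω(τ)‖ (assuming sup_{τ≤t}‖ω(τ)‖ is nondecreasing and the bound holds for all t). -/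
open Matrix MeasureTheory Filter Topology Set intervalIntegral

/-! The inner convolution is bounded componentwise by `S / f₁`, `S = sup_{z ≤ t} ‖ω z‖`, because
the kernel `e^{-f₁ s}` has mass at most `1 / f₁` on `[0, ∞)`. Hence
`|e_χ(t)| ≤ (m / f₁) S · expConv f₁ ‖θ̇‖ t`, and it remains to see that the exponential
convolution of an `L²` function tends to `0`. For an `L¹` function this is dominated convergence;
for `g ∈ L²`, Young's inequality `|g| ≤ η / 2 + g² / (2η)` gives
`|expConv c g t| ≤ η / (2c) + expConv c g² t / (2η)` for every `η > 0`, and `g² ∈ L¹`. -/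

lemma integral_exp_neg_mul_sub_le {c : ℝ} (hc : 0 < c) (a b : ℝ) :
    ∫ z in a..b, Real.exp (-c * (b - z)) ≤ c⁻¹ := by
  have h := integral_comp_mul_sub Real.exp (a := a) (b := b) hc.ne' (c * b)
  simp only [integral_exp, sub_self, Real.exp_zero, smul_eq_mul] at h
  rw [show (fun z => Real.exp (-c * (b - z))) = fun z => Real.exp (c * z - c * b) by
    ext z; ring_nf, h]
  exact mul_le_of_le_one_right (inv_pos.2 hc).le (sub_le_self _ (Real.exp_pos _).le)

lemma tendsto_exp_neg_mul_sub_atTop {c : ℝ} (hc : 0 < c) (τ : ℝ) :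
    Tendsto (fun t => Real.exp (-c * (t - τ))) atTop (𝓝 0) :=
  Real.tendsto_exp_atBot.comp <|
    (tendsto_atTop_add_const_right _ (-τ) tendsto_id).const_mul_atTop_of_neg (neg_lt_zero.2 hc)

lemma abs_dotProduct_le {n : Type*} [Fintype n] (x y : n → ℝ) :
    |x ⬝ᵥ y| ≤ Fintype.card n * ‖x‖ * ‖y‖ := by
  calc |x ⬝ᵥ y| ≤ ∑ i, |x i * y i| := Finset.abs_sum_le_sum_abs _ _
    _ ≤ ∑ _i : n, ‖x‖ * ‖y‖ := Finset.sum_le_sum fun i _ => by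
        rw [abs_mul]
        exact mul_le_mul (norm_le_pi_norm x i) (norm_le_pi_norm y i) (abs_nonneg _)
          (norm_nonneg _)
    _ = Fintype.card n * ‖x‖ * ‖y‖ := by simp [mul_assoc]

lemma intervalIntegrable_of_sq_integrableOn {g : ℝ → ℝ} (hg0 : 0 ≤ g)
    (hg : IntegrableOn (fun τ => g τ ^ 2) (Ioi 0)) {t : ℝ} (ht : 0 ≤ t) :
    IntervalIntegrable g volume 0 t := by
  have hmeas : AEStronglyMeasurable g (volume.restrict (Ioi 0)) := by
    simpa [Function.comp_def, Real.sqrt_sq (hg0 _)] using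
      Real.continuous_sqrt.comp_aestronglyMeasurable hg.aestronglyMeasurable
  have hL2 : MemLp g 2 (volume.restrict (Ioi 0)) := (memLp_two_iff_integrable_sq hmeas).2 hg
  rw [intervalIntegrable_iff_integrableOn_Ioc_of_le ht]
  exact (hL2.mono_measure (Measure.restrict_mono Ioc_subset_Ioi_self le_rfl)).integrable one_le_two

noncomputable def expConv (c : ℝ) (u : ℝ → ℝ) (t : ℝ) : ℝ :=
  ∫ τ in (0:ℝ)..t, Real.exp (-c * (t - τ)) * u τ

section expConv

variable {c : ℝ} {u v : ℝ → ℝ} {t : ℝ}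

lemma expConv_const_mul (a : ℝ) : expConv c (fun τ => a * v τ) t = a * expConv c v t := by
  simp only [expConv, ← intervalIntegral.integral_const_mul, mul_left_comm]

lemma intervalIntegrable_exp_mul (hv : IntervalIntegrable v volume 0 t) :
    IntervalIntegrable (fun τ => Real.exp (-c * (t - τ)) * v τ) volume 0 t :=
  hv.continuousOn_mul (by fun_prop)

lemma expConv_add (hu : IntervalIntegrable u volume 0 t) (hv : IntervalIntegrable v volume 0 t) :
    expConv c (fun τ => u τ + v τ) t = expConv c u t + expConv c v t := by
  simp only [expConv, mul_add]
  exact integral_add (intervalIntegrable_exp_mul hu) (intervalIntegrable_exp_mul hv)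

lemma abs_expConv_le_expConv (ht : 0 ≤ t) (huv : ∀ τ ∈ Ioc 0 t, |u τ| ≤ v τ)
    (hv : IntervalIntegrable v volume 0 t) : |expConv c u t| ≤ expConv c v t := by
  refine (Real.norm_eq_abs _).symm.trans_le <| norm_integral_le_of_norm_le ht
    (ae_of_all _ fun τ hτ => ?_) (intervalIntegrable_exp_mul hv)
  rw [norm_mul, Real.norm_of_nonneg (Real.exp_pos _).le]
  exact mul_le_mul_of_nonneg_left (huv τ hτ) (Real.exp_pos _).le

lemma expConv_one_le (hc : 0 < c) : expConv c (fun _ => 1) t ≤ c⁻¹ := by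
  simpa [expConv] using integral_exp_neg_mul_sub_le hc 0 t

lemma abs_expConv_le (hc : 0 < c) (ht : 0 ≤ t) {S : ℝ} (hS : 0 ≤ S)
    (hu : ∀ τ ∈ Ioc 0 t, |u τ| ≤ S) : |expConv c u t| ≤ S / c := by
  calc |expConv c u t| ≤ expConv c (fun _ => S * 1) t :=
        abs_expConv_le_expConv ht (by simpa using hu) intervalIntegrable_const
    _ = S * expConv c (fun _ => 1) t := expConv_const_mul S
    _ ≤ S * c⁻¹ := mul_le_mul_of_nonneg_left (expConv_one_le hc) hS
    _ = S / c := (div_eq_mul_inv S c).symm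

lemma norm_expConv_pi_le {n : Type*} [Fintype n] (hc : 0 < c) (ht : 0 ≤ t) {w : ℝ → n → ℝ}
    {S : ℝ} (hS : 0 ≤ S) (hw : ∀ τ ∈ Ioc 0 t, ‖w τ‖ ≤ S) :
    ‖fun i => expConv c (fun τ => w τ i) t‖ ≤ S / c :=
  (pi_norm_le_iff_of_nonneg (div_nonneg hS hc.le)).2 fun i =>
    abs_expConv_le hc ht hS fun τ hτ => (norm_le_pi_norm (w τ) i).trans (hw τ hτ)

lemma tendsto_expConv_of_integrableOn (hc : 0 < c) (hu : IntegrableOn u (Ioi 0)) :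
    Tendsto (expConv c u) atTop (𝓝 0) := by
  set F : ℝ → ℝ → ℝ := fun t => (Iic t).indicator fun τ => Real.exp (-c * (t - τ)) * u τ
  have hF : ∀ t ≥ 0, ∫ τ in Ioi 0, F t τ = expConv c u t := fun t ht => by
    rw [setIntegral_indicator measurableSet_Iic, Ioi_inter_Iic, expConv, integral_of_le ht]
  have hlim : Tendsto (fun t => ∫ τ in Ioi 0, F t τ) atTop (𝓝 (∫ _ in Ioi (0:ℝ), (0:ℝ))) := by
    refine tendsto_integral_filter_of_dominated_convergence (fun τ => ‖u τ‖) ?_ ?_ hu.norm ?_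
    · refine .of_forall fun t => (AEStronglyMeasurable.mul ?_ hu.aestronglyMeasurable).indicator
        measurableSet_Iic
      exact (by fun_prop : Continuous fun τ => Real.exp (-c * (t - τ))).aestronglyMeasurable
    · refine .of_forall fun t => ae_of_all _ fun τ => ?_
      simp only [F]
      by_cases hτ : τ ∈ Iic t
      · rw [indicator_of_mem hτ, norm_mul, Real.norm_of_nonneg (Real.exp_pos _).le]
        refine mul_le_of_le_one_left (norm_nonneg _) (Real.exp_le_one_iff.2 ?_)
        nlinarith [mem_Iic.1 hτ]
      · rw [indicator_of_notMem hτ, norm_zero]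
        exact norm_nonneg _
    · refine ae_of_all _ fun τ => ?_
      have := (tendsto_exp_neg_mul_sub_atTop hc τ).mul_const (u τ)
      rw [zero_mul] at this
      exact this.congr' ((eventually_ge_atTop τ).mono fun t ht => (indicator_of_mem ht _).symm)
  rw [MeasureTheory.integral_zero] at hlim
  exact hlim.congr' ((eventually_ge_atTop 0).mono hF)

lemma abs_expConv_le_add_expConv_sq (hc : 0 < c) (hu : IntegrableOn (fun τ => u τ ^ 2) (Ioi 0))
    (ht : 0 ≤ t) {η : ℝ} (hη : 0 < η) :
    |expConv c u t| ≤ η / (2 * c) + (2 * η)⁻¹ * expConv c (fun τ => u τ ^ 2) t := by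
  have hu2 : IntervalIntegrable (fun τ => u τ ^ 2) volume 0 t :=
    (intervalIntegrable_iff_integrableOn_Ioc_of_le ht).2 (hu.mono_set Ioc_subset_Ioi_self)
  have young : ∀ x : ℝ, |x| ≤ η / 2 * 1 + (2 * η)⁻¹ * x ^ 2 := fun x => by
    rw [← sq_abs x]
    field_simp
    nlinarith [sq_nonneg (|x| - η)]
  calc |expConv c u t| ≤ expConv c (fun τ => η / 2 * 1 + (2 * η)⁻¹ * u τ ^ 2) t :=
        abs_expConv_le_expConv ht (fun τ _ => young (u τ))
          (intervalIntegrable_const.add (hu2.const_mul _))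
    _ = η / 2 * expConv c (fun _ => 1) t + (2 * η)⁻¹ * expConv c (fun τ => u τ ^ 2) t := by
        rw [expConv_add intervalIntegrable_const (hu2.const_mul _), expConv_const_mul,
          expConv_const_mul]
    _ ≤ η / 2 * c⁻¹ + (2 * η)⁻¹ * expConv c (fun τ => u τ ^ 2) t := by
        gcongr
        exact expConv_one_le hc
    _ = η / (2 * c) + (2 * η)⁻¹ * expConv c (fun τ => u τ ^ 2) t := by field_simp

lemma tendsto_expConv_of_sq_integrableOn (hc : 0 < c)
    (hu : IntegrableOn (fun τ => u τ ^ 2) (Ioi 0)) : Tendsto (expConv c u) atTop (𝓝 0) := by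
  rw [Metric.tendsto_atTop]
  intro ε hε
  obtain ⟨T, hT⟩ := eventually_atTop.1 <|
    ((tendsto_expConv_of_integrableOn hc hu).eventually
      (gt_mem_nhds (show 0 < c * ε ^ 2 by positivity))).and (eventually_ge_atTop 0)
  refine ⟨T, fun t htT => ?_⟩
  obtain ⟨hsmall, ht⟩ := hT t htT
  rw [Real.dist_eq, sub_zero]
  calc |expConv c u t|
      ≤ c * ε / (2 * c) + (2 * (c * ε))⁻¹ * expConv c (fun τ => u τ ^ 2) t :=
        abs_expConv_le_add_expConv_sq hc hu ht (by positivity)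
    _ < c * ε / (2 * c) + (2 * (c * ε))⁻¹ * (c * ε ^ 2) := by gcongr
    _ = ε := by field_simp; ring

end expConv

theorem echi_small_o_general {m : ℕ} (f₁ : ℝ) (hf₁ : 0 < f₁)
    (θd : ℝ → Fin m → ℝ)
    (hθd : Integrable (fun t => ‖θd t‖^2) (volume.restrict (Set.Ioi 0)))
    (ω : ℝ → Fin m → ℝ)
    (hloc : ∀ r : ℝ, BddAbove ((fun τ => ‖ω τ‖) '' Set.Icc 0 r))
    (eχ : ℝ → ℝ)
    (heχ : ∀ t, eχ t = ∫ τ in (0:ℝ)..t, Real.exp (-f₁ * (t - τ)) *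
        (θd τ ⬝ᵥ fun i => ∫ z in (0:ℝ)..τ, Real.exp (-f₁ * (τ - z)) * ω z i)) :
    ∃ β : ℝ → ℝ, (∀ t, 0 ≤ β t) ∧ Filter.Tendsto β Filter.atTop (nhds 0) ∧
      ∀ t ≥ (0:ℝ), |eχ t| ≤ β t * sSup ((fun τ => ‖ω τ‖) '' Set.Icc 0 t) := by
  set G := expConv f₁ fun τ => ‖θd τ‖
  refine ⟨fun t => m / f₁ * |G t|, fun t => by positivity, ?_, fun t ht => ?_⟩
  · simpa using (tendsto_expConv_of_sq_integrableOn hf₁ hθd).abs.const_mul (m / f₁)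
  set S := sSup ((fun τ => ‖ω τ‖) '' Icc 0 t)
  have hωS : ∀ z ∈ Icc 0 t, ‖ω z‖ ≤ S := fun z hz => le_csSup (hloc t) ⟨z, hz, rfl⟩
  have hS : 0 ≤ S := (norm_nonneg _).trans (hωS 0 ⟨le_rfl, ht⟩)
  have hinner : ∀ τ ∈ Ioc 0 t, ‖fun i => expConv f₁ (fun z => ω z i) τ‖ ≤ S / f₁ :=
    fun τ hτ => norm_expConv_pi_le hf₁ hτ.1.le hS fun z hz => hωS z ⟨hz.1.le, hz.2.trans hτ.2⟩
  have heχt : eχ t = expConv f₁ (fun τ => θd τ ⬝ᵥ fun i => expConv f₁ (fun z => ω z i) τ) t :=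
    heχ t
  calc |eχ t| ≤ expConv f₁ (fun τ => m * S / f₁ * ‖θd τ‖) t := by
        rw [heχt]
        refine abs_expConv_le_expConv ht (fun τ hτ => ?_) <|
          (intervalIntegrable_of_sq_integrableOn (fun _ => norm_nonneg _) hθd ht).const_mul _
        calc _ ≤ m * ‖θd τ‖ * ‖fun i => expConv f₁ (fun z => ω z i) τ‖ := by
              simpa using abs_dotProduct_le (θd τ) _
          _ ≤ m * ‖θd τ‖ * (S / f₁) := by gcongr; exact hinner τ hτ
          _ = m * S / f₁ * ‖θd τ‖ := by ring
    _ = m / f₁ * G t * S := by rw [expConv_const_mul]; ring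
    _ ≤ m / f₁ * |G t| * S := by gcongr; exact le_abs_self _

theorem echi_small_o {m : ℕ} (f₁ : ℝ) (hf₁ : 0 < f₁)
    (θd : ℝ → Fin m → ℝ) (hθdm : Measurable θd)
    (hθd : Integrable (fun t => ‖θd t‖^2) (volume.restrict (Set.Ioi 0)))
    (ω : ℝ → Fin m → ℝ) (hωm : Measurable ω)
    (hloc : ∀ r : ℝ, BddAbove ((fun τ => ‖ω τ‖) '' Set.Icc 0 r))
    (eχ : ℝ → ℝ)
    (heχ : ∀ t, eχ t = ∫ τ in (0:ℝ)..t, Real.exp (-f₁ * (t - τ)) *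
        (θd τ ⬝ᵥ fun i => ∫ z in (0:ℝ)..τ, Real.exp (-f₁ * (τ - z)) * ω z i)) :
    ∃ β : ℝ → ℝ, (∀ t, 0 ≤ β t) ∧ Filter.Tendsto β Filter.atTop (nhds 0) ∧
      ∀ t ≥ (0:ℝ), |eχ t| ≤ β t * sSup ((fun τ => ‖ω τ‖) '' Set.Icc 0 t) :=
  echi_small_o_general f₁ hf₁ θd hθd ω hloc eχ heχ
end

section
/- Let e : [0,∞) → ℝⁿ be C¹ with e ∈ L²([0,∞); ℝⁿ) and ė bounded. Then e(t) → 0 as t → ∞. -/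
/-!
The derivative bound makes `e` Lipschitz, hence uniformly continuous. If `‖e t‖ ≥ ε` at
arbitrarily large times `t`, uniform continuity keeps `‖e‖ ≥ ε / 2` on a window `(t, t + δ)` of
fixed length, so every tail `∫_{(N, ∞)} ‖e‖²` is at least `(ε / 2)² δ`; but the tails of a
convergent integral tend to zero.
-/

open MeasureTheory Filter Set Topology
open scoped ENNReal

theorem MeasureTheory.IntegrableOn.tendsto_setIntegral_Ioi_atTop_zero {E : Type*}
    [NormedAddCommGroup E] [NormedSpace ℝ E] {μ : Measure ℝ} {f : ℝ → E} {a : ℝ}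
    (hf : IntegrableOn f (Ioi a) μ) :
    Tendsto (fun N => ∫ t in Ioi N, f t ∂μ) atTop (𝓝 0) := by
  have h := tendsto_setIntegral_of_antitone (fun _ => measurableSet_Ioi)
    (fun _ _ hNM => Ioi_subset_Ioi hNM) ⟨a, hf⟩
  have hempty : ⋂ N : ℝ, Ioi N = ∅ := iInter_eq_empty_iff.2 fun t => ⟨t, lt_irrefl t⟩
  rwa [hempty, setIntegral_empty] at h

theorem UniformContinuous.tendsto_atTop_zero_of_memLp {E : Type*} [NormedAddCommGroup E]
    {f : ℝ → E} {p : ℝ≥0∞} {a : ℝ} (hf : UniformContinuous f)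
    (hLp : MemLp f p (volume.restrict (Ioi a))) (hp₀ : p ≠ 0) (hp : p ≠ ∞) :
    Tendsto f atTop (𝓝 0) := by
  set q := p.toReal
  have hq : 0 < q := ENNReal.toReal_pos hp₀ hp
  have hint : IntegrableOn (fun t => ‖f t‖ ^ q) (Ioi a) := hLp.integrable_norm_rpow hp₀ hp
  rw [NormedAddGroup.tendsto_nhds_zero]
  by_contra! ⟨ε, hε, hfar⟩
  obtain ⟨δ, hδ, hclose⟩ := Metric.uniformContinuous_iff.1 hf (ε / 2) (half_pos hε)
  obtain ⟨N, hN⟩ := eventually_atTop.1 <| hint.tendsto_setIntegral_Ioi_atTop_zero.eventually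
    (gt_mem_nhds (show 0 < (ε / 2) ^ q * δ by positivity))
  obtain ⟨t, ht, hft⟩ := frequently_atTop.1 hfar (max N a)
  have hfs : ∀ s ∈ Ioo t (t + δ), (ε / 2) ^ q ≤ ‖f s‖ ^ q := by
    intro s hs
    have hst : dist (f s) (f t) < ε / 2 := hclose <| by
      rw [Real.dist_eq, abs_of_pos (sub_pos.2 hs.1)]
      linarith [hs.2]
    rw [dist_eq_norm'] at hst
    have hnorm : ε / 2 ≤ ‖f s‖ := by linarith [norm_sub_norm_le (f t) (f s)]
    exact Real.rpow_le_rpow (by positivity) hnorm hq.le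
  have hint_tail : IntegrableOn (fun t => ‖f t‖ ^ q) (Ioi t) :=
    hint.mono_set (Ioi_subset_Ioi (le_of_max_le_right ht))
  have hlow : (ε / 2) ^ q * δ ≤ ∫ s in Ioi t, ‖f s‖ ^ q := calc
    (ε / 2) ^ q * δ ≤ ∫ s in Ioo t (t + δ), ‖f s‖ ^ q := by
      simpa [hδ.le] using setIntegral_ge_of_const_le_real measurableSet_Ioo (by simp) hfs
        (hint_tail.mono_set Ioo_subset_Ioi_self)
    _ ≤ ∫ s in Ioi t, ‖f s‖ ^ q :=
      setIntegral_mono_set hint_tail (.of_forall fun _ => by positivity)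
        Ioo_subset_Ioi_self.eventuallyLE
  exact (hN t (le_of_max_le_left ht)).not_ge hlow

theorem barbalat_l2 {n : ℕ} (e e' : ℝ → EuclideanSpace ℝ (Fin n))
    (hd : ∀ t, HasDerivAt e (e' t) t)
    (hL2 : Integrable (fun t => ‖e t‖^2) (volume.restrict (Set.Ioi 0)))
    (hbd : ∃ M : ℝ, ∀ t, ‖e' t‖ ≤ M) :
    Filter.Tendsto e Filter.atTop (nhds 0) := by
  obtain ⟨M, hM⟩ := hbd
  have hlip : LipschitzWith M.toNNReal e :=
    lipschitzWith_of_nnnorm_deriv_le (fun t => (hd t).differentiableAt) fun t => by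
      rw [(hd t).deriv, ← NNReal.coe_le_coe, coe_nnnorm, Real.coe_toNNReal']
      exact (hM t).trans (le_max_left _ _)
  have hmem : MemLp e 2 (volume.restrict (Ioi 0)) :=
    (memLp_two_iff_integrable_sq_norm hlip.continuous.aestronglyMeasurable).2 hL2
  exact hlip.uniformContinuous.tendsto_atTop_zero_of_memLp hmem two_ne_zero ENNReal.ofNat_ne_top
end
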